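/- arXiv:1606.08817 — 4 statements merged into one kernel-verified Lean document; each statement's English description precedes it below -/
import Mathlib

section
/- Let f : [0,1] → ℝ be f(θ) = 0.1702·θ² + 0.5768·θ + 0.8746 on [0, 0.85897] and 0 elsewhere, and let F(φ) = ∫₀^φ f(θ) dθ. Then for every φ ∈ (0,1], (F(φ) − (1 − 1/e)·∫₀^φ F(θ) dθ)/φ < 0.8785. -/
open MeasureTheory intervalIntegral

noncomputable def Pp (x : ℝ) : ℝ := 0.1702 * x^3 / 3 + 0.5768 * x^2 / 2 + 0.8746 * x
noncomputable def Qq (x : ℝ) : ℝ := 0.1702 * x^4 / 12 + 0.5768 * x^3 / 6 + 0.8746 * x^2 / 2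

lemma cont_p : Continuous (fun x : ℝ => 0.1702 * x^2 + 0.5768 * x + 0.8746) := by continuity
lemma cont_P : Continuous Pp := by unfold Pp; continuity

lemma int_p (u v : ℝ) : (∫ x in u..v, (0.1702 * x^2 + 0.5768 * x + 0.8746)) = Pp v - Pp u := by
  have h1 : IntervalIntegrable (fun x : ℝ => 0.1702 * x^2) volume u v :=
    (Continuous.intervalIntegrable (by continuity) u v)
  have h2 : IntervalIntegrable (fun x : ℝ => 0.5768 * x) volume u v :=
    (Continuous.intervalIntegrable (by continuity) u v)
  have h3 : IntervalIntegrable (fun x : ℝ => (0.8746:ℝ)) volume u v :=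
    (Continuous.intervalIntegrable (by continuity) u v)
  rw [intervalIntegral.integral_add (h1.add h2) h3, intervalIntegral.integral_add h1 h2,
    intervalIntegral.integral_const, intervalIntegral.integral_const_mul,
    intervalIntegral.integral_const_mul, integral_pow, integral_id]
  unfold Pp; push_cast [smul_eq_mul]; ring

lemma int_P (u v : ℝ) : (∫ x in u..v, Pp x) = Qq v - Qq u := by
  have h1 : IntervalIntegrable (fun x : ℝ => 0.1702 * x^3 / 3) volume u v :=
    (Continuous.intervalIntegrable (by continuity) u v)
  have h2 : IntervalIntegrable (fun x : ℝ => 0.5768 * x^2 / 2) volume u v :=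
    (Continuous.intervalIntegrable (by continuity) u v)
  have h3 : IntervalIntegrable (fun x : ℝ => 0.8746 * x) volume u v :=
    (Continuous.intervalIntegrable (by continuity) u v)
  unfold Pp
  rw [intervalIntegral.integral_add (h1.add h2) h3, intervalIntegral.integral_add h1 h2]
  rw [show (fun x : ℝ => 0.1702 * x^3 / 3) = fun x : ℝ => (0.1702/3) * x^3 by funext x; ring]
  rw [show (fun x : ℝ => 0.5768 * x^2 / 2) = fun x : ℝ => (0.5768/2) * x^2 by funext x; ring]
  rw [intervalIntegral.integral_const_mul, intervalIntegral.integral_const_mul,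
    intervalIntegral.integral_const_mul, integral_pow, integral_pow, integral_id]
  unfold Qq; push_cast; ring

theorem stmt_3 (f F : ℝ → ℝ)
    (hf : ∀ θ : ℝ, f θ = if θ ≤ 0.85897 then 0.1702 * θ^2 + 0.5768 * θ + 0.8746 else 0)
    (hF : ∀ φ : ℝ, F φ = ∫ θ in (0:ℝ)..φ, f θ) :
    ∀ φ ∈ Set.Ioc (0:ℝ) 1,
      (F φ - (1 - 1 / Real.exp 1) * ∫ θ in (0:ℝ)..φ, F θ) / φ < 0.8785 := by
  intro φ hφ
  obtain ⟨hφ0, hφ1⟩ := hφ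
  have hc : (0.85897:ℝ) = 0.85897 := rfl
  -- f is interval integrable
  have hfind : f = (Set.Iic (0.85897:ℝ)).indicator (fun x => 0.1702 * x^2 + 0.5768 * x + 0.8746) := by
    funext x; rw [hf]; simp [Set.indicator, Set.mem_Iic]
  have hfi : ∀ u v : ℝ, IntervalIntegrable f volume u v := by
    intro u v
    rw [hfind, intervalIntegrable_iff]
    exact (cont_p.integrableOn_uIoc.indicator measurableSet_Iic)
  -- F φ = Pp (min φ (0.85897:ℝ)) for φ ≥ 0
  have hFA : ∀ x : ℝ, 0 ≤ x → x ≤ (0.85897:ℝ) → F x = Pp x := by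
    intro x h0 hxc
    rw [hF]
    have : (∫ θ in (0:ℝ)..x, f θ) = ∫ θ in (0:ℝ)..x, (0.1702 * θ^2 + 0.5768 * θ + 0.8746) := by
      apply intervalIntegral.integral_congr
      intro t ht
      rw [Set.uIcc_of_le h0] at ht
      rw [hf, if_pos (le_trans ht.2 hxc)]
    rw [this, int_p]
    unfold Pp; ring
  have hPc : (0:ℝ) ≤ (0.85897:ℝ) := by norm_num
  have hFB : ∀ x : ℝ, 0 ≤ x → F x = Pp (min x (0.85897:ℝ)) := by
    intro x h0
    rcases le_or_gt x (0.85897:ℝ) with h | h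
    · rw [min_eq_left h]; exact hFA x h0 h
    · rw [min_eq_right h.le, hF]
      rw [← intervalIntegral.integral_add_adjacent_intervals (hfi 0 (0.85897:ℝ)) (hfi (0.85897:ℝ) x)]
      have h1 : (∫ θ in (0:ℝ)..(0.85897:ℝ), f θ) = Pp (0.85897:ℝ) := by
        rw [← hF]; exact hFA (0.85897:ℝ) hPc le_rfl
      have h2 : (∫ θ in (0.85897:ℝ)..x, f θ) = 0 := by
        rw [show (0:ℝ) = ∫ θ in (0.85897:ℝ)..x, (0:ℝ) by simp]
        apply intervalIntegral.integral_congr_ae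
        filter_upwards with t ht
        rw [Set.uIoc_of_le h.le] at ht
        rw [hf, if_neg (not_le.2 ht.1)]
      rw [h1, h2, add_zero]
  -- inner integral of F
  have hIF : (∫ θ in (0:ℝ)..φ, F θ) = ∫ θ in (0:ℝ)..φ, Pp (min θ (0.85897:ℝ)) := by
    apply intervalIntegral.integral_congr
    intro t ht
    rw [Set.uIcc_of_le hφ0.le] at ht
    exact hFB t ht.1
  have hk : (0.6321205587 : ℝ) ≤ 1 - 1 / Real.exp 1 := by
    have h1 : (2.7182818283 : ℝ) < Real.exp 1 := Real.exp_one_gt_d9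
    have h2 : 1 / Real.exp 1 < 1 / 2.7182818283 :=
      one_div_lt_one_div_of_lt (by norm_num) h1
    nlinarith
  set K : ℝ := 1 - 1 / Real.exp 1 with hK
  rw [div_lt_iff₀ hφ0]
  rcases le_or_gt φ (0.85897:ℝ) with hcase | hcase
  · -- φ ≤ (0.85897:ℝ)
    have hFφ : F φ = Pp φ := hFA φ hφ0.le hcase
    have hI : (∫ θ in (0:ℝ)..φ, F θ) = Qq φ := by
      rw [hIF]
      have : (∫ θ in (0:ℝ)..φ, Pp (min θ (0.85897:ℝ))) = ∫ θ in (0:ℝ)..φ, Pp θ := by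
        apply intervalIntegral.integral_congr
        intro t ht
        rw [Set.uIcc_of_le hφ0.le] at ht
        show Pp (min t (0.85897:ℝ)) = Pp t
        rw [min_eq_left (le_trans ht.2 hcase)]
      rw [this, int_P]
      unfold Qq; ring
    rw [hFφ, hI]
    have hQ : 0 ≤ Qq φ := by unfold Qq; positivity
    have hKQ : 0.6321205587 * Qq φ ≤ K * Qq φ := mul_le_mul_of_nonneg_right hk hQ
    unfold Pp Qq at *
    nlinarith [sq_nonneg (φ - 0.534153), mul_nonneg hφ0.le (sq_nonneg (φ - 0.534153)), hφ0.le]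
  · -- φ > (0.85897:ℝ)
    have hFφ : F φ = Pp (0.85897:ℝ) := by rw [hFB φ hφ0.le, min_eq_right hcase.le]
    have hGc : Continuous (fun θ : ℝ => Pp (min θ (0.85897:ℝ))) :=
      cont_P.comp (continuous_id.min continuous_const)
    have hI : (∫ θ in (0:ℝ)..φ, F θ) = Qq (0.85897:ℝ) + Pp (0.85897:ℝ) * (φ - (0.85897:ℝ)) := by
      rw [hIF, ← intervalIntegral.integral_add_adjacent_intervals
        (hGc.intervalIntegrable 0 (0.85897:ℝ)) (hGc.intervalIntegrable (0.85897:ℝ) φ)]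
      have h1 : (∫ θ in (0:ℝ)..(0.85897:ℝ), Pp (min θ (0.85897:ℝ))) = Qq (0.85897:ℝ) := by
        have : (∫ θ in (0:ℝ)..(0.85897:ℝ), Pp (min θ (0.85897:ℝ))) = ∫ θ in (0:ℝ)..(0.85897:ℝ), Pp θ := by
          apply intervalIntegral.integral_congr
          intro t ht
          rw [Set.uIcc_of_le hPc] at ht
          show Pp (min t (0.85897:ℝ)) = Pp t
          rw [min_eq_left ht.2]
        rw [this, int_P]; unfold Qq; ring
      have h2 : (∫ θ in (0.85897:ℝ)..φ, Pp (min θ (0.85897:ℝ))) = Pp (0.85897:ℝ) * (φ - (0.85897:ℝ)) := by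
        have : (∫ θ in (0.85897:ℝ)..φ, Pp (min θ (0.85897:ℝ))) = ∫ θ in (0.85897:ℝ)..φ, Pp (0.85897:ℝ) := by
          apply intervalIntegral.integral_congr
          intro t ht
          rw [Set.uIcc_of_le hcase.le] at ht
          show Pp (min t (0.85897:ℝ)) = Pp (0.85897:ℝ)
          rw [min_eq_right ht.1]
        rw [this, intervalIntegral.integral_const, smul_eq_mul]; ring
      rw [h1, h2]
    rw [hFφ, hI]
    have h1 : (0:ℝ) ≤ Qq (0.85897:ℝ) + Pp (0.85897:ℝ) * (φ - (0.85897:ℝ)) := by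
      unfold Pp Qq; nlinarith [hcase.le]
    have hKQ : 0.6321205587 * (Qq (0.85897:ℝ) + Pp (0.85897:ℝ) * (φ - (0.85897:ℝ))) ≤ K * (Qq (0.85897:ℝ) + Pp (0.85897:ℝ) * (φ - (0.85897:ℝ))) :=
      mul_le_mul_of_nonneg_right hk h1
    unfold Pp Qq at *
    nlinarith [hcase.le, sub_nonneg.2 hcase.le]
end

section
/- Let T > 0 be an integer and let weights w(t) = e^{−t/T}/T for t = 1, …, T. Then Σ_{t=1}^{T} w(t)·t + T/e ≤ (1 − 1/e)·(T + 1). -/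
open intervalIntegral

lemma aux_deriv (c : ℝ) (hc : 0 < c) (s : ℝ) :
    HasDerivAt (fun s : ℝ => -Real.exp (-s / c) * (s + c + 1))
      (Real.exp (-s / c) * (s + 1) / c) s := by
  have h1 : HasDerivAt (fun s : ℝ => -s / c) (-1 / c) s := by
    simpa using ((hasDerivAt_id s).neg.div_const c)
  have h2 : HasDerivAt (fun s : ℝ => Real.exp (-s / c)) (Real.exp (-s / c) * (-1 / c)) s :=
    (Real.hasDerivAt_exp _).comp s h1
  have h3 : HasDerivAt (fun s : ℝ => s + c + 1) 1 s := by
    simpa using ((hasDerivAt_id s).add_const c).add_const 1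
  have := (h2.neg.mul h3)
  refine this.congr_deriv ?_
  show _ + -Real.exp (-s / c) * 1 = _
  field_simp
  ring

theorem stmt_10 (T : ℕ) (hT : 0 < T) :
    (∑ t ∈ Finset.Icc 1 T, (Real.exp (-(t : ℝ) / T) / T) * t) + (T : ℝ) / Real.exp 1
      ≤ (1 - 1 / Real.exp 1) * ((T : ℝ) + 1) := by
  set c : ℝ := (T : ℝ) with hc_def
  have hc : 0 < c := by simpa [hc_def] using (Nat.cast_pos.mpr hT : (0:ℝ) < (T:ℝ))
  set f : ℝ → ℝ := fun s => Real.exp (-s / c) * (s + 1) / c with hf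
  have hcont : Continuous f := by
    apply Continuous.div_const
    exact ((Real.continuous_exp.comp (continuous_id.neg.div_const c)).mul
      (continuous_id.add continuous_const))
  -- step 1: termwise bound
  have hterm : ∀ t ∈ Finset.Icc 1 T,
      (Real.exp (-(t : ℝ) / c) / c) * t ≤ ∫ s in ((t : ℝ) - 1)..(t : ℝ), f s := by
    intro t ht
    simp only [Finset.mem_Icc] at ht
    have ht1 : (1 : ℝ) ≤ (t : ℝ) := by exact_mod_cast ht.1
    have hle : ((t : ℝ) - 1) ≤ (t : ℝ) := by linarith
    have hconst : (Real.exp (-(t : ℝ) / c) / c) * (t : ℝ)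
        = ∫ _s in ((t : ℝ) - 1)..(t : ℝ), (Real.exp (-(t : ℝ) / c) / c) * (t : ℝ) := by
      simp
    rw [hconst]
    apply intervalIntegral.integral_mono_on hle (by simp)
      (hcont.intervalIntegrable _ _)
    intro s hs
    rw [Set.mem_Icc] at hs
    have hexp : Real.exp (-(t : ℝ) / c) ≤ Real.exp (-s / c) := by
      apply Real.exp_le_exp.mpr
      gcongr
      exact hs.2
    have hmul : Real.exp (-(t : ℝ) / c) * (t : ℝ) ≤ Real.exp (-s / c) * (s + 1) := by
      apply mul_le_mul hexp (by linarith [hs.1]) (by linarith) (Real.exp_pos _).le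
    simp only [hf]
    rw [div_mul_eq_mul_div]
    gcongr
  -- step 2: sum of integrals = integral from 0 to T
  have hsum : ∑ t ∈ Finset.Icc 1 T, ∫ s in ((t : ℝ) - 1)..(t : ℝ), f s
      = ∫ s in (0 : ℝ)..c, f s := by
    have hadj := intervalIntegral.sum_integral_adjacent_intervals
      (μ := MeasureTheory.volume) (a := fun n : ℕ => (n : ℝ)) (f := f) (n := T)
      (fun k _ => hcont.intervalIntegrable _ _)
    simp only [Nat.cast_zero] at hadj
    rw [← hadj]
    rw [← Finset.Ico_add_one_right_eq_Icc, Finset.sum_Ico_eq_sum_range]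
    norm_num
    apply Finset.sum_congr rfl
    intro i hi
    congr 1
    ring
  -- step 3: evaluate the integral
  have hval : ∫ s in (0 : ℝ)..c, f s
      = (c + 1) - (2 * c + 1) / Real.exp 1 := by
    rw [intervalIntegral.integral_eq_sub_of_hasDerivAt
      (fun s _ => aux_deriv c hc s) (hcont.intervalIntegrable _ _)]
    have h0 : -(0 : ℝ) / c = 0 := by simp
    have hT' : -c / c = -1 := by field_simp
    rw [h0, hT']
    rw [Real.exp_neg, Real.exp_zero]
    field_simp
    ring
  calc (∑ t ∈ Finset.Icc 1 T, (Real.exp (-(t : ℝ) / c) / c) * t) + c / Real.exp 1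
      ≤ (∑ t ∈ Finset.Icc 1 T, ∫ s in ((t : ℝ) - 1)..(t : ℝ), f s) + c / Real.exp 1 := by
        exact add_le_add_left (Finset.sum_le_sum hterm) _
    _ = ((c + 1) - (2 * c + 1) / Real.exp 1) + c / Real.exp 1 := by rw [hsum, hval]
    _ = (1 - 1 / Real.exp 1) * (c + 1) := by
        field_simp
        ring
end

section
/- Let δ ∈ (0, 1/2] and let s̄ = {0, 1, …, ⌈1/δ⌉} ∪ {⌈(1+δ)^k/δ⌉ : k ∈ ℕ}. Then for any positive integer s, the smallest nonnegative integer Δ with s + Δ ∈ s̄ satisfies s + Δ ≤ (1+δ)·s. -/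
theorem stmt_12 (δ : ℝ) (hδ : δ ∈ Set.Ioc (0:ℝ) (1/2))
    (Sbar : Set ℕ)
    (hSbar : Sbar = {n : ℕ | n ≤ ⌈1/δ⌉₊} ∪ {n : ℕ | ∃ k : ℕ, n = ⌈(1+δ)^k / δ⌉₊})
    (s : ℕ) (hs : 0 < s) (Δ : ℕ)
    (hΔ : IsLeast {d : ℕ | s + d ∈ Sbar} Δ) :
    ((s + Δ : ℕ) : ℝ) ≤ (1 + δ) * s := by
  obtain ⟨hδ0, hδ2⟩ := hδ
  have hs1 : (1:ℝ) ≤ s := by exact_mod_cast hs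
  by_cases hsmall : s ≤ ⌈1/δ⌉₊
  · have h0 : (0:ℕ) ∈ {d : ℕ | s + d ∈ Sbar} := by
      simp only [Set.mem_setOf_eq, hSbar, Set.mem_union, add_zero]
      left; exact hsmall
    have hΔ0 : Δ = 0 := Nat.le_zero.mp (hΔ.2 h0)
    subst hΔ0
    push_cast
    nlinarith
  · have h1δ : (1:ℝ) < 1 + δ := by linarith
    have hex : ∃ k : ℕ, s ≤ ⌈(1+δ)^k / δ⌉₊ := by
      obtain ⟨k, hk⟩ := pow_unbounded_of_one_lt ((s:ℝ) * δ) h1δ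
      refine ⟨k, ?_⟩
      have hle : (s:ℝ) ≤ (1+δ)^k / δ := by
        rw [le_div_iff₀ hδ0]; linarith
      exact_mod_cast hle.trans (Nat.le_ceil _)
    classical
    set k := Nat.find hex with hk
    have hks : s ≤ ⌈(1+δ)^k / δ⌉₊ := Nat.find_spec hex
    have hk0 : k ≠ 0 := by
      intro h
      rw [h] at hks
      simp only [pow_zero] at hks
      exact hsmall hks
    set t := ⌈(1+δ)^k / δ⌉₊ with ht
    -- Δ ≤ t - s
    have htmem : (t - s : ℕ) ∈ {d : ℕ | s + d ∈ Sbar} := by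
      simp only [Set.mem_setOf_eq, hSbar]
      right
      exact ⟨k, by omega⟩
    have hΔle : s + Δ ≤ t := by
      have := hΔ.2 htmem
      omega
    obtain ⟨m, hm⟩ : ∃ m, k = m + 1 := ⟨k - 1, by omega⟩
    have hmlt : ¬ s ≤ ⌈(1+δ)^m / δ⌉₊ := Nat.find_min hex (by omega)
    have hmle : ((1+δ)^m / δ : ℝ) ≤ (s:ℝ) - 1 := by
      have : ⌈(1+δ)^m / δ⌉₊ ≤ s - 1 := by omega
      have := (Nat.ceil_le).mp this
      have hcast : ((s - 1 : ℕ) : ℝ) = (s:ℝ) - 1 := by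
        have : 1 ≤ s := hs
        push_cast [this]; ring
      linarith [hcast ▸ ‹((1+δ)^m / δ : ℝ) ≤ ((s-1:ℕ):ℝ)›]
    have hpos : (0:ℝ) ≤ (1+δ)^k / δ := by positivity
    have htlt : (t:ℝ) < (1+δ)^k / δ + 1 := Nat.ceil_lt_add_one hpos
    have hkeq : ((1+δ)^k / δ : ℝ) = (1+δ) * ((1+δ)^m / δ) := by
      rw [hm]; field_simp; ring
    have : (t:ℝ) ≤ (1+δ) * s := by
      rw [hkeq] at htlt
      nlinarith
    calc ((s + Δ : ℕ) : ℝ) ≤ (t : ℝ) := by exact_mod_cast hΔle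
      _ ≤ (1+δ) * s := this
end

section
/- Let a = 0.1702, b = 0.5768, c = 0.8746, e = exp(1), and define ρ(φ) = aφ²/3 + bφ/2 + c − (1 − 1/e)·(aφ³/12 + bφ²/6 + cφ/2) for φ ∈ [0, 0.85897]. Then the derivative ρ'(φ) = A₂φ² + A₁φ + A₀ with A₂ = −(1−1/e)a/4 < 0, A₁ = 2a/3 − (1−1/e)b/3, A₀ = b/2 − (1−1/e)c/2, and ρ attains its maximum on [0, 0.85897] at φ* = (A₁ + √(A₁² − 4A₀A₂))/(−2A₂), with ρ(φ*) < 0.8785. -/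
set_option maxHeartbeats 1000000


theorem stmt_15 (a b c d : ℝ) (ha : a = 0.1702) (hb : b = 0.5768) (hc : c = 0.8746)
    (hd : d = 0.85897) (e : ℝ) (he : e = Real.exp 1)
    (ρ : ℝ → ℝ)
    (hρ : ∀ φ : ℝ, ρ φ = a * φ^2 / 3 + b * φ / 2 + c -
      (1 - 1/e) * (a * φ^3 / 12 + b * φ^2 / 6 + c * φ / 2))
    (A₂ A₁ A₀ : ℝ)
    (hA₂ : A₂ = -(1 - 1/e) * a / 4) (hA₁ : A₁ = 2 * a / 3 - (1 - 1/e) * b / 3)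
    (hA₀ : A₀ = b / 2 - (1 - 1/e) * c / 2)
    (φstar : ℝ) (hφstar : φstar = (A₁ + Real.sqrt (A₁^2 - 4 * A₀ * A₂)) / (-2 * A₂)) :
    A₂ < 0 ∧
    (∀ φ : ℝ, HasDerivAt ρ (A₂ * φ^2 + A₁ * φ + A₀) φ) ∧
    IsMaxOn ρ (Set.Icc 0 d) φstar ∧
    ρ φstar < 0.8785 := by
  subst ha hb hc hd he
  set k : ℝ := 1 - 1 / Real.exp 1 with hk
  have hEpos : (0:ℝ) < Real.exp 1 := Real.exp_pos 1
  have hE1 : (2.7182818283:ℝ) < Real.exp 1 := Real.exp_one_gt_d9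
  have hE2 : Real.exp 1 < 2.7182818286 := Real.exp_one_lt_d9
  have hklo : (0.6321205588:ℝ) ≤ k := by
    have h1 : 1 / Real.exp 1 ≤ 0.3678794412 := by
      rw [div_le_iff₀ hEpos]; nlinarith
    simp only [hk]; linarith
  have hkhi : k ≤ 0.6321205589 := by
    have h1 : (0.3678794411:ℝ) ≤ 1 / Real.exp 1 := by
      rw [le_div_iff₀ hEpos]; nlinarith
    simp only [hk]; linarith
  -- derivative
  have hderiv : ∀ φ : ℝ, HasDerivAt ρ (A₂ * φ^2 + A₁ * φ + A₀) φ := by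
    intro φ
    have hρ' : ρ = fun x : ℝ => 0.1702 * x^2 / 3 + 0.5768 * x / 2 + 0.8746 -
        k * (0.1702 * x^3 / 12 + 0.5768 * x^2 / 6 + 0.8746 * x / 2) := funext hρ
    rw [hρ']
    have h3 : HasDerivAt (fun x : ℝ => x^3) (3 * φ^2) φ := by
      simpa using hasDerivAt_pow 3 φ
    have h2 : HasDerivAt (fun x : ℝ => x^2) (2 * φ) φ := by
      simpa using hasDerivAt_pow 2 φ
    have h1 : HasDerivAt (fun x : ℝ => x) 1 φ := hasDerivAt_id φ
    have H := (((h2.const_mul ((0.1702:ℝ)/3)).add (h1.const_mul ((0.5768:ℝ)/2))).add_const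
        (0.8746:ℝ)).sub
      ((((h3.const_mul ((0.1702:ℝ)/12)).add (h2.const_mul ((0.5768:ℝ)/6))).add
        (h1.const_mul ((0.8746:ℝ)/2))).const_mul k)
    have hfun : (fun x : ℝ => ((0.1702:ℝ)/3 * x^2 + (0.5768:ℝ)/2 * x + 0.8746) -
        k * ((0.1702:ℝ)/12 * x^3 + (0.5768:ℝ)/6 * x^2 + (0.8746:ℝ)/2 * x)) =
        (fun x : ℝ => 0.1702 * x^2 / 3 + 0.5768 * x / 2 + 0.8746 -
          k * (0.1702 * x^3 / 12 + 0.5768 * x^2 / 6 + 0.8746 * x / 2)) := by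
      funext x; ring
    have H : HasDerivAt (fun x : ℝ => 0.1702 * x^2 / 3 + 0.5768 * x / 2 + 0.8746 -
          k * (0.1702 * x^3 / 12 + 0.5768 * x^2 / 6 + 0.8746 * x / 2))
          ((0.1702:ℝ) / 3 * (2 * φ) + 0.5768 / 2 * 1 - k * (0.1702 / 12 * (3 * φ ^ 2) + 0.5768 / 6 * (2 * φ) + 0.8746 / 2 * 1)) φ := by
      rw [← hfun]; exact H
    convert H using 1
    rw [hA₂, hA₁, hA₀]; ring
  -- sign facts
  have hA2neg : A₂ < 0 := by rw [hA₂]; nlinarith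
  have hA2ne : A₂ ≠ 0 := ne_of_lt hA2neg
  have hA1neg : A₁ < 0 := by rw [hA₁]; nlinarith
  have hDlo : (0.0367875:ℝ)^2 ≤ A₁^2 - 4 * A₀ * A₂ := by
    rw [hA₁, hA₀, hA₂]; nlinarith [sq_nonneg (k - 0.6321205588)]
  have hDhi : A₁^2 - 4 * A₀ * A₂ ≤ (0.03678751:ℝ)^2 := by
    rw [hA₁, hA₀, hA₂]; nlinarith [sq_nonneg (k - 0.6321205589)]
  set s : ℝ := Real.sqrt (A₁^2 - 4 * A₀ * A₂) with hs
  have hDnn : (0:ℝ) ≤ A₁^2 - 4 * A₀ * A₂ := le_trans (by positivity) hDlo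
  have hslo : (0.0367875:ℝ) ≤ s := by
    have := Real.sqrt_le_sqrt hDlo
    rwa [Real.sqrt_sq (by norm_num : (0:ℝ) ≤ 0.0367875)] at this
  have hshi : s ≤ 0.03678751 := by
    have := Real.sqrt_le_sqrt hDhi
    rwa [Real.sqrt_sq (by norm_num : (0:ℝ) ≤ 0.03678751)] at this
  have hssq : s^2 = A₁^2 - 4 * A₀ * A₂ := Real.sq_sqrt hDnn
  have hden : (0:ℝ) < -2 * A₂ := by linarith
  have hnum : φstar * (-2 * A₂) = A₁ + s := by
    rw [hφstar, div_mul_cancel₀ _ (ne_of_gt hden)]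
  have hseq : s = -2 * A₂ * φstar - A₁ := by linarith [hnum]
  -- q(φstar) = 0, i.e. A₀ = -A₁ φ* - A₂ φ*²
  have hq0 : A₀ = -A₁ * φstar - A₂ * φstar^2 := by
    have h4 : A₂ * (A₀ + A₁ * φstar + A₂ * φstar^2) = 0 := by
      have h5 : (-2 * A₂ * φstar - A₁)^2 = A₁^2 - 4 * A₀ * A₂ := by
        rw [← hseq]; exact hssq
      linear_combination (1/4 : ℝ) * h5
    have h6 := (mul_eq_zero.mp h4).resolve_left hA2ne
    linarith
  -- φstar bounds
  have hplo : (0.533865:ℝ) ≤ φstar := by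
    rw [hφstar, le_div_iff₀ hden]
    rw [hA₁, hA₂]; nlinarith
  have hphi : φstar ≤ 0.533866 := by
    rw [hφstar, div_le_iff₀ hden]
    rw [hA₁, hA₂]; nlinarith
  have hφ0 : (0:ℝ) ≤ φstar := by linarith
  have hφd : φstar ≤ 0.85897 := by linarith
  refine ⟨hA2neg, hderiv, ?_, ?_⟩
  · -- IsMaxOn
    have hcont : Continuous ρ := by
      have : Differentiable ℝ ρ := fun x => (hderiv x).differentiableAt
      exact this.continuous
    have hdiff : Differentiable ℝ ρ := fun x => (hderiv x).differentiableAt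
    have hmono : MonotoneOn ρ (Set.Icc 0 φstar) := by
      apply monotoneOn_of_deriv_nonneg (convex_Icc 0 φstar) hcont.continuousOn
        hdiff.differentiableOn
      intro x hx
      rw [interior_Icc] at hx
      rw [(hderiv x).deriv]
      have hfac : A₂ * (x + φstar) + A₁ ≤ 0 := by
        nlinarith [hx.1, hx.2, mul_pos (neg_pos.mpr hA2neg) hx.1, hseq, hslo]
      nlinarith [hq0, mul_nonneg (by linarith [hx.2] : (0:ℝ) ≤ φstar - x)
        (by linarith : (0:ℝ) ≤ -(A₂ * (x + φstar) + A₁))]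
    have hanti : AntitoneOn ρ (Set.Icc φstar 0.85897) := by
      apply antitoneOn_of_deriv_nonpos (convex_Icc φstar 0.85897) hcont.continuousOn
        hdiff.differentiableOn
      intro x hx
      rw [interior_Icc] at hx
      rw [(hderiv x).deriv]
      have hfac : A₂ * (x + φstar) + A₁ ≤ 0 := by
        nlinarith [hx.1, mul_pos (neg_pos.mpr hA2neg) (show (0:ℝ) < x - φstar by linarith [hx.1]),
          hseq, hslo, mul_pos (neg_pos.mpr hA2neg) (show (0:ℝ) < φstar by linarith)]
      nlinarith [hq0, mul_nonneg (by linarith [hx.1] : (0:ℝ) ≤ x - φstar)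
        (by linarith : (0:ℝ) ≤ -(A₂ * (x + φstar) + A₁))]
    rw [isMaxOn_iff]
    intro x hx
    rcases le_total x φstar with h | h
    · exact hmono ⟨hx.1, h⟩ ⟨hφ0, le_refl _⟩ h
    · exact hanti ⟨le_refl _, hφd⟩ ⟨h, hx.2⟩ h
  · -- final bound
    rw [hρ]
    have h1 : (0:ℝ) ≤ φstar - 0.533865 := by linarith
    have h2 : (0:ℝ) ≤ 0.533866 - φstar := by linarith
    have h3 : (0:ℝ) ≤ k - 0.6321205588 := by linarith
    have h4 : (0:ℝ) ≤ 0.6321205589 - k := by linarith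
    nlinarith [mul_nonneg h1 h3, mul_nonneg h1 h4, mul_nonneg h2 h3, mul_nonneg h2 h4,
      mul_nonneg (mul_nonneg h1 h1) h1, mul_nonneg (mul_nonneg h2 h2) h2,
      mul_nonneg (mul_nonneg h1 h1) h4, mul_nonneg (mul_nonneg h2 h2) h3,
      mul_nonneg (mul_nonneg h1 h2) h3, mul_nonneg (mul_nonneg h1 h2) h4,
      mul_nonneg h1 h2, sq_nonneg (φstar - 0.533865), sq_nonneg (0.533866 - φstar)]
end
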